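/- Every language accepted by a weight-reducing deterministic one-tape Turing machine is regular. -/

import Mathlib

/-- A deterministic one-tape Turing machine over input alphabet `A`,
states `Q`, working alphabet `Γ`. -/
structure DTM (A Q Γ : Type*) where
  /-- embedding of input symbols into the working alphabet -/
  embed : A → Γ
  /-- the blank symbol -/
  blank : Γ
  /-- the initial state -/
  q0 : Q
  /-- the set of final states -/
  F : Set Q
  /-- the partial transition function; `true` means a right move -/
  δ : Q → Γ → Option (Q × Γ × Bool)

/-- A configuration: current state, tape contents, head position. -/
structure TMCfg (Q Γ : Type*) where
  state : Q
  tape : ℤ → Γ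
  head : ℤ

namespace DTM

variable {A Q Γ : Type*}

/-- One computation step (partial). -/
def stepCfg (M : DTM A Q Γ) (c : TMCfg Q Γ) : Option (TMCfg Q Γ) :=
  (M.δ c.state (c.tape c.head)).map (fun t =>
    ⟨t.1, Function.update c.tape c.head t.2.1,
      if t.2.2 then c.head + 1 else c.head - 1⟩)

/-- Initial tape contents on input `w`: the input occupies cells `0,…,|w|-1`,
all other cells are blank. -/
def initTape (M : DTM A Q Γ) (w : List A) : ℤ → Γ :=
  fun i => if 0 ≤ i then (w.map M.embed).getD i.toNat M.blank else M.blank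

/-- The initial configuration on input `w`. -/
def initCfg (M : DTM A Q Γ) (w : List A) : TMCfg Q Γ :=
  ⟨M.q0, M.initTape w, 0⟩

/-- The configuration reached after `n` steps on input `w` (`none` if the
machine halted earlier). -/
def run (M : DTM A Q Γ) (w : List A) : ℕ → Option (TMCfg Q Γ)
  | 0 => some (M.initCfg w)
  | n + 1 => (M.run w n).bind M.stepCfg

/-- `M` accepts `w` if its computation on `w` halts in a final state. -/
def Accepts (M : DTM A Q Γ) (w : List A) : Prop :=
  ∃ n c, M.run w n = some c ∧ M.stepCfg c = none ∧ c.state ∈ M.F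

/-- The language accepted by `M`. -/
def lang (M : DTM A Q Γ) : Language A := { w | M.Accepts w }

/-- `M` is weight-reducing: there is a strict partial order on `Γ` such that
every transition rewrites the scanned symbol with a strictly smaller one. -/
def WeightReducing (M : DTM A Q Γ) : Prop :=
  ∃ lt : Γ → Γ → Prop, IsStrictOrder Γ lt ∧
    ∀ p σ q τ d, M.δ p σ = some (q, τ, d) → lt τ σ

/-- The set of time instants at which the computation of `M` on `w` visits
(i.e. has its head scanning) the tape cell `i`. -/
def visits (M : DTM A Q Γ) (w : List A) (i : ℤ) : Set ℕ :=
  { n | ∃ c, M.run w n = some c ∧ c.head = i }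

/-- The computation of `M` on `w` is infinite. -/
def InfiniteOn (M : DTM A Q Γ) (w : List A) : Prop :=
  ∀ n, (M.run w n).isSome

end DTM

/-!
A word `u` interacts with any continuation `z` only through the boundary between cell `|u| - 1`
and cell `|u|`. Its *left behaviour* maps each sequence `s` of states in which the head re-enters
the cells left of `|u|` to the outcome of the last visit: the state in which the head leaves
again, or the verdict of halting there, or divergence. Acceptance of `u ++ z` is determined by
`z` and the left behaviour of `u`: simulating the machine on the cells from `|u|` on, with the
left behaviour as an oracle for the visits to the left part, reproduces the real computation.

Weight reduction bounds the number of re-entries: each time the head leaves the left part it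
moves right from cell `|u| - 1`, rewriting that cell with a strictly smaller symbol, and cells
never increase. So no sequence of `|Γ|` re-entries ends with an exit, and the left behaviour is
determined by its values on sequences of length at most `|Γ|`. These finitely many behaviours
refine the Myhill–Nerode equivalence, hence the language is regular.
-/

theorem Language.isRegular_of_leftQuotient_factors {α ι : Type*} [Finite ι] {L : Language α}
    (f : List α → ι) (hf : ∀ u v, f u = f v → L.leftQuotient u = L.leftQuotient v) :
    L.IsRegular := by
  refine Language.IsRegular.of_finite_range_leftQuotient ?_
  have : Finite (Set.range L.leftQuotient) :=
    Finite.of_injective (fun K : Set.range L.leftQuotient => f K.2.choose) fun K K' h =>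
      Subtype.ext <| K.2.choose_spec.symm.trans <| (hf _ _ h).trans K'.2.choose_spec
  exact Set.toFinite _

inductive Outcome (Q X : Type*)
  | exits (q : Q) (x : X)
  | halts (b : Bool)
  | diverges
deriving Fintype

namespace Outcome

variable {Q X : Type*}

def IsExit : Outcome Q X → Prop
  | exits _ _ => True
  | _ => False

def erase : Outcome Q X → Outcome Q Unit
  | exits q _ => exits q ()
  | halts b => halts b
  | diverges => diverges

end Outcome

namespace DTM

variable {A Q Γ : Type*} (M : DTM A Q Γ)

def steps (c : TMCfg Q Γ) : ℕ → Option (TMCfg Q Γ)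
  | 0 => some c
  | n + 1 => (steps c n).bind M.stepCfg

variable {M}

theorem run_eq_steps (w : List A) (n : ℕ) : M.run w n = M.steps (M.initCfg w) n := by
  induction n with
  | zero => rfl
  | succ n ih => simp only [DTM.run, steps, ih]

theorem steps_add (c : TMCfg Q Γ) (n k : ℕ) :
    M.steps c (n + k) = (M.steps c n).bind fun d => M.steps d k := by
  induction k with
  | zero => cases M.steps c n <;> rfl
  | succ k ih => rw [← add_assoc, steps, ih]; cases M.steps c n <;> rfl

theorem run_add {w : List A} {n : ℕ} {c : TMCfg Q Γ} (h : M.run w n = some c) (k : ℕ) :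
    M.run w (n + k) = M.steps c k := by
  rw [run_eq_steps, steps_add, ← run_eq_steps, h, Option.bind_some]

theorem steps_succ_eq_some_iff {c d : TMCfg Q Γ} {n : ℕ} :
    M.steps c (n + 1) = some d ↔ ∃ e, M.steps c n = some e ∧ M.stepCfg e = some d :=
  Option.bind_eq_some_iff

theorem isSome_steps_of_le {c : TMCfg Q Γ} {n k : ℕ} (hk : k ≤ n) (h : (M.steps c n).isSome) :
    (M.steps c k).isSome := by
  obtain ⟨j, rfl⟩ := Nat.exists_eq_add_of_le hk
  rw [steps_add] at h
  exact Option.isSome_of_isSome_bind h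

theorem steps_eq_none_of_halted {c d : TMCfg Q Γ} {n k : ℕ} (h : M.steps c n = some d)
    (hd : M.stepCfg d = none) (hk : n < k) : M.steps c k = none := by
  obtain ⟨j, rfl⟩ := Nat.exists_eq_add_of_lt hk
  rw [add_right_comm, steps_add, steps, h]
  simp [hd]

theorem eq_of_steps_halted {c d₁ d₂ : TMCfg Q Γ} {n₁ n₂ : ℕ}
    (h₁ : M.steps c n₁ = some d₁) (hd₁ : M.stepCfg d₁ = none)
    (h₂ : M.steps c n₂ = some d₂) (hd₂ : M.stepCfg d₂ = none) : d₁ = d₂ := by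
  rcases lt_trichotomy n₁ n₂ with hn | rfl | hn
  · simp [steps_eq_none_of_halted h₁ hd₁ hn] at h₂
  · exact Option.some_injective _ (h₁.symm.trans h₂)
  · simp [steps_eq_none_of_halted h₂ hd₂ hn] at h₁

theorem exists_halted_of_steps_eq_none {c : TMCfg Q Γ} {n : ℕ} (h : M.steps c n = none) :
    ∃ k d, M.steps c k = some d ∧ M.stepCfg d = none := by
  induction n with
  | zero => simp [steps] at h
  | succ n ih =>
    cases he : M.steps c n with
    | none => exact ih he
    | some d => exact ⟨n, d, he, by simpa [steps, he] using h⟩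

theorem stepCfg_eq_some_iff {c d : TMCfg Q Γ} :
    M.stepCfg c = some d ↔ ∃ q τ dir, M.δ c.state (c.tape c.head) = some (q, τ, dir) ∧
      d = ⟨q, Function.update c.tape c.head τ, if dir then c.head + 1 else c.head - 1⟩ := by
  simp only [stepCfg, Option.map_eq_some_iff, Prod.exists, eq_comm (b := d)]

theorem head_stepCfg {c d : TMCfg Q Γ} (h : M.stepCfg c = some d) :
    d.head = c.head + 1 ∨ d.head = c.head - 1 := by
  obtain ⟨q, τ, dir, -, rfl⟩ := stepCfg_eq_some_iff.mp h
  cases dir <;> simp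

def glue (m : ℤ) (L : ℤ → Γ) (t : ℕ → Γ) : ℤ → Γ :=
  fun i => if i < m then L i else t (i - m).toNat

def glueCfg (m : ℤ) (t : ℕ → Γ) (c : TMCfg Q Γ) : TMCfg Q Γ :=
  ⟨c.state, glue m c.tape t, c.head⟩

section Glue

variable {m : ℤ} {L : ℤ → Γ} {t : ℕ → Γ}

theorem glue_of_lt {i : ℤ} (hi : i < m) : glue m L t i = L i := if_pos hi

theorem glue_add (j : ℕ) : glue m L t (m + j) = t j := by
  simp [glue]

theorem update_glue_of_lt {i : ℤ} (hi : i < m) (τ : Γ) :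
    Function.update (glue m L t) i τ = glue m (Function.update L i τ) t := by
  ext k
  by_cases hk : k < m
  · simp only [Function.update_apply, glue, if_pos hk]
  · simp only [Function.update_apply, glue, if_neg hk, if_neg (show k ≠ i by omega)]

theorem update_glue_add (j : ℕ) (τ : Γ) :
    Function.update (glue m L t) (m + j) τ = glue m L (Function.update t j τ) := by
  ext k
  by_cases hk : k < m
  · simp only [Function.update_apply, glue, if_pos hk, if_neg (show k ≠ m + j by omega)]
  · have : (k - m).toNat = j ↔ k = m + j := by omega
    simp only [Function.update_apply, glue, if_neg hk, this]

end Glue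

theorem initTape_append (u z : List A) :
    M.initTape (u ++ z) = glue u.length (M.initTape u) fun j => M.initTape z j := by
  ext i
  by_cases hi : i < u.length
  · rw [glue_of_lt hi]
    unfold initTape
    split_ifs with h0
    · rw [List.map_append, List.getD_append _ _ _ _ (by simp; omega)]
    · rfl
  · obtain ⟨j, rfl⟩ : ∃ j : ℕ, i = u.length + j := ⟨(i - u.length).toNat, by omega⟩
    rw [glue_add]
    have hj : (u.length + j : ℤ).toNat = (u.map M.embed).length + j := by simp; omega
    simp only [initTape, if_pos (by omega : (0 : ℤ) ≤ u.length + j), if_pos (Int.natCast_nonneg j),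
      hj, Int.toNat_natCast, List.map_append]
    rw [List.getD_append_right _ _ _ _ (by omega), Nat.add_sub_cancel_left]

theorem stepCfg_glueCfg {m : ℤ} (t : ℕ → Γ) {c : TMCfg Q Γ} (hc : c.head < m) :
    M.stepCfg (glueCfg m t c) = (M.stepCfg c).map (glueCfg m t) := by
  simp only [stepCfg, glueCfg, glue_of_lt hc, Option.map_map]
  congr 1
  funext r
  simp [glueCfg, update_glue_of_lt hc]

theorem stepCfg_glue_add (q : Q) (m : ℤ) (L : ℤ → Γ) (t : ℕ → Γ) (h : ℕ) :
    M.stepCfg ⟨q, glue m L t, m + h⟩ = (M.δ q (t h)).map fun r =>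
      ⟨r.1, glue m L (Function.update t h r.2.1), if r.2.2 then m + h + 1 else m + h - 1⟩ := by
  simp only [stepCfg, glue_add, update_glue_add]

def StaysLeft (m : ℤ) (c : TMCfg Q Γ) (n : ℕ) : Prop :=
  ∀ k < n, ∀ d, M.steps c k = some d → d.head < m

theorem steps_glueCfg {m : ℤ} (t : ℕ → Γ) {c : TMCfg Q Γ} {n : ℕ} (h : M.StaysLeft m c n) :
    M.steps (glueCfg m t c) n = (M.steps c n).map (glueCfg m t) := by
  induction n with
  | zero => rfl
  | succ n ih =>
    rw [steps, ih fun k hk => h k (by omega), steps]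
    cases hd : M.steps c n with
    | none => rfl
    | some d => exact stepCfg_glueCfg t (h n (by omega) d hd)

open Classical in
/-- Runs `c` until the head first reaches cell `m`; `exits q L` records the state and the tape at
that moment. -/
noncomputable def excursion (m : ℤ) (c : TMCfg Q Γ) : Outcome Q (ℤ → Γ) :=
  if h : ∃ n d, M.steps c n = some d ∧ m ≤ d.head ∧ M.StaysLeft m c n then
    .exits h.choose_spec.choose.state h.choose_spec.choose.tape
  else if h' : ∃ n d, M.steps c n = some d ∧ M.stepCfg d = none then
    .halts (decide (h'.choose_spec.choose.state ∈ M.F))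
  else .diverges

section Excursion

variable {m : ℤ} {c : TMCfg Q Γ}

theorem staysLeft_of_not_exists_exit
    (h : ¬∃ n d, M.steps c n = some d ∧ m ≤ d.head ∧ M.StaysLeft m c n) (n : ℕ) :
    M.StaysLeft m c n := by
  induction n with
  | zero => intro k hk; omega
  | succ n ih =>
    intro k hk d hd
    rcases Nat.lt_succ_iff_lt_or_eq.mp hk with hk | rfl
    · exact ih k hk d hd
    · by_contra hm
      exact h ⟨k, d, hd, not_lt.mp hm, ih⟩

theorem head_eq_of_first_exit (hc : c.head ≤ m) {n : ℕ} {d : TMCfg Q Γ}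
    (hd : M.steps c n = some d) (hm : m ≤ d.head) (hleft : M.StaysLeft m c n) : d.head = m := by
  cases n with
  | zero => cases hd; omega
  | succ n =>
    obtain ⟨e, he, hstep⟩ := steps_succ_eq_some_iff.mp hd
    have := hleft n (by omega) e he
    rcases head_stepCfg hstep with h | h <;> omega

theorem exists_steps_of_excursion_eq_exits {q : Q} {L : ℤ → Γ} (hc : c.head ≤ m)
    (h : M.excursion m c = .exits q L) :
    ∃ n, M.StaysLeft m c n ∧ M.steps c n = some ⟨q, L, m⟩ := by
  unfold excursion at h
  split_ifs at h with hex
  obtain ⟨hd, hm, hleft⟩ := hex.choose_spec.choose_spec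
  generalize hex.choose_spec.choose = d at h hd hm
  generalize hex.choose = n at hd hleft
  obtain ⟨rfl, rfl⟩ := Outcome.exits.inj h
  refine ⟨n, hleft, hd.trans ?_⟩
  rw [← head_eq_of_first_exit hc hd hm hleft]

theorem excursion_eq_halts {b : Bool} (h : M.excursion m c = .halts b) :
    (∀ n, M.StaysLeft m c n) ∧
      ∃ n d, M.steps c n = some d ∧ M.stepCfg d = none ∧ (d.state ∈ M.F ↔ b) := by
  unfold excursion at h
  split_ifs at h with hex hhalt
  obtain ⟨hd, hstep⟩ := hhalt.choose_spec.choose_spec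
  exact ⟨staysLeft_of_not_exists_exit hex, _, _, hd, hstep, by simp [← Outcome.halts.inj h]⟩

theorem excursion_eq_diverges (h : M.excursion m c = .diverges) :
    (∀ n, M.StaysLeft m c n) ∧ ∀ n, (M.steps c n).isSome := by
  unfold excursion at h
  split_ifs at h with hex hhalt
  refine ⟨staysLeft_of_not_exists_exit hex, fun n => ?_⟩
  cases hn : M.steps c n with
  | none => exact absurd (exists_halted_of_steps_eq_none hn) hhalt
  | some d => rfl

variable (t : ℕ → Γ)

theorem steps_glueCfg_of_excursion_eq_exits {q : Q} {L : ℤ → Γ} (hc : c.head ≤ m)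
    (h : M.excursion m c = .exits q L) :
    ∃ n, M.steps (glueCfg m t c) n = some ⟨q, glue m L t, m⟩ := by
  obtain ⟨n, hleft, hn⟩ := exists_steps_of_excursion_eq_exits hc h
  exact ⟨n, by rw [steps_glueCfg t hleft, hn]; rfl⟩

theorem steps_glueCfg_of_excursion_eq_halts {b : Bool} (h : M.excursion m c = .halts b) :
    ∃ n d, M.steps (glueCfg m t c) n = some d ∧ M.stepCfg d = none ∧
      (d.state ∈ M.F ↔ b) := by
  obtain ⟨hleft, n, d, hd, hstep, hb⟩ := excursion_eq_halts h
  refine ⟨n, glueCfg m t d, by rw [steps_glueCfg t (hleft n), hd]; rfl, ?_, hb⟩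
  rw [stepCfg_glueCfg t (hleft (n + 1) n n.lt_succ_self d hd), hstep]
  rfl

theorem isSome_steps_glueCfg_of_excursion_eq_diverges (h : M.excursion m c = .diverges) (n : ℕ) :
    (M.steps (glueCfg m t c) n).isSome := by
  obtain ⟨hleft, hsome⟩ := excursion_eq_diverges h
  rw [steps_glueCfg t (hleft n), Option.isSome_map]
  exact hsome n

end Excursion

noncomputable def reenter (m : ℤ) : Outcome Q (ℤ → Γ) → Q → Outcome Q (ℤ → Γ)
  | .exits _ L, p => M.excursion m ⟨p, L, m - 1⟩
  | o, _ => o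

/-- The left behaviour of `u`, with the tape of the left part attached to exits. -/
noncomputable def leftRun (u : List A) (s : List Q) : Outcome Q (ℤ → Γ) :=
  s.foldl (M.reenter u.length) (M.excursion u.length (M.initCfg u))

theorem foldl_reenter_of_not_isExit {m : ℤ} {o : Outcome Q (ℤ → Γ)} (ho : ¬o.IsExit)
    (s : List Q) : s.foldl (M.reenter m) o = o := by
  induction s with
  | nil => rfl
  | cons p s ih =>
    cases o with
    | exits q L => exact absurd trivial ho
    | halts b => exact ih
    | diverges => exact ih

theorem leftRun_append_singleton {u : List A} {s : List Q} {q : Q} {L : ℤ → Γ}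
    (h : M.leftRun u s = .exits q L) (p : Q) :
    M.leftRun u (s ++ [p]) = M.excursion u.length ⟨p, L, u.length - 1⟩ := by
  simp only [leftRun, List.foldl_append, List.foldl_cons, List.foldl_nil] at h ⊢
  rw [h]
  rfl

theorem infiniteOn_of_run_eq_some {w : List A} {n : ℕ} {c : TMCfg Q Γ}
    (hn : M.run w n = some c) (h : ∀ k, (M.steps c k).isSome) : M.InfiniteOn w := by
  intro k
  rw [run_eq_steps]
  refine isSome_steps_of_le (Nat.le_add_left k n) ?_
  rw [← run_eq_steps, run_add hn]
  exact h k

end DTM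

/-- Configurations of the machine restricted to the cells from `|u|` on: `t j` is cell `|u| + j`,
`h` the relative head position, `s` the states in which the left part has been re-entered. -/
inductive RightCfg (Q Γ : Type*)
  | halted (b : Bool)
  | diverged
  | running (q : Q) (t : ℕ → Γ) (h : ℕ) (s : List Q)

def RightCfg.ofOutcome {Q Γ : Type*} (t : ℕ → Γ) (s : List Q) : Outcome Q Unit → RightCfg Q Γ
  | .exits q _ => .running q t 0 s
  | .halts b => .halted b
  | .diverges => .diverged

namespace DTM

variable {A Q Γ : Type*} (M : DTM A Q Γ)

open Classical in
noncomputable def rightStep (T : List Q → Outcome Q Unit) : RightCfg Q Γ → RightCfg Q Γ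
  | .running q t h s =>
    match M.δ q (t h), h with
    | none, _ => .halted (decide (q ∈ M.F))
    | some (q', τ, true), h => .running q' (Function.update t h τ) (h + 1) s
    | some (q', τ, false), h + 1 => .running q' (Function.update t (h + 1) τ) h s
    | some (q', τ, false), 0 =>
      .ofOutcome (Function.update t 0 τ) (s ++ [q']) (T (s ++ [q']))
  | c => c

noncomputable def rightRun (T : List Q → Outcome Q Unit) (z : List A) : ℕ → RightCfg Q Γ
  | 0 => .ofOutcome (fun j => M.initTape z j) [] (T [])
  | n + 1 => M.rightStep T (rightRun T z n)

/-- The real computation on `u ++ z` passes through the configuration described by `x`; a running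
`x` after `k` simulated steps is reached after at least `k` real steps. -/
def Realizes (u z : List A) : RightCfg Q Γ → ℕ → Prop
  | .halted b, _ => ∃ n c, M.run (u ++ z) n = some c ∧ M.stepCfg c = none ∧ (c.state ∈ M.F ↔ b)
  | .diverged, _ => M.InfiniteOn (u ++ z)
  | .running q t h s, k => ∃ p L, M.leftRun u s = .exits p L ∧
      ∃ n, k ≤ n ∧ M.run (u ++ z) n = some ⟨q, glue u.length L t, u.length + h⟩

variable {M} {u z : List A}

theorem Realizes.mono {x : RightCfg Q Γ} {k k' : ℕ} (hx : M.Realizes u z x k) (hk : k' ≤ k) :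
    M.Realizes u z x k' := by
  cases x with
  | running q t h s =>
    obtain ⟨p, L, hL, n, hkn, hn⟩ := hx
    exact ⟨p, L, hL, n, hk.trans hkn, hn⟩
  | _ => exact hx

theorem realizes_ofOutcome {s : List Q} {e : TMCfg Q Γ} (he : e.head ≤ u.length)
    (hs : M.leftRun u s = M.excursion u.length e) {t : ℕ → Γ} {n : ℕ}
    (hn : M.run (u ++ z) n = some (glueCfg u.length t e)) :
    M.Realizes u z (.ofOutcome t s (M.leftRun u s).erase) n := by
  rw [hs]
  cases ho : M.excursion u.length e with
  | exits p L =>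
    obtain ⟨κ, hκ⟩ := steps_glueCfg_of_excursion_eq_exits t he ho
    exact ⟨p, L, hs.trans ho, n + κ, by omega, by rw [run_add hn, hκ]; simp⟩
  | halts b =>
    obtain ⟨κ, d, hκ, hd, hb⟩ := steps_glueCfg_of_excursion_eq_halts t ho
    exact ⟨n + κ, d, by rw [run_add hn, hκ], hd, hb⟩
  | diverges =>
    exact infiniteOn_of_run_eq_some hn (isSome_steps_glueCfg_of_excursion_eq_diverges t ho)

theorem realizes_rightStep {x : RightCfg Q Γ} {k : ℕ} (hx : M.Realizes u z x k) :
    M.Realizes u z (M.rightStep (fun s => (M.leftRun u s).erase) x) (k + 1) := by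
  cases x with
  | halted b => exact hx
  | diverged => exact hx
  | running q t h s =>
    obtain ⟨p, L, hL, n, hkn, hn⟩ := hx
    have hstep := stepCfg_glue_add (M := M) q u.length L t h
    cases hδ : M.δ q (t h) with
    | none =>
      rw [hδ] at hstep
      simp only [rightStep, hδ]
      exact ⟨n, _, hn, hstep, by simp⟩
    | some r =>
      obtain ⟨q', τ, dir⟩ := r
      rw [hδ] at hstep
      have hn' := run_add hn 1
      rw [steps, steps, Option.bind_some, hstep] at hn'
      cases dir with
      | true =>
        simp only [rightStep, hδ]
        exact ⟨p, L, hL, n + 1, by omega, by rw [hn']; simp [add_assoc]⟩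
      | false =>
        cases h with
        | succ h =>
          simp only [rightStep, hδ]
          exact ⟨p, L, hL, n + 1, by omega, by rw [hn']; simp; ring⟩
        | zero =>
          simp only [rightStep, hδ]
          refine (realizes_ofOutcome (e := ⟨q', L, u.length - 1⟩) (by simp)
            (leftRun_append_singleton hL q') (n := n + 1) ?_).mono (by omega)
          rw [hn']
          simp [glueCfg]

theorem realizes_rightRun (k : ℕ) :
    M.Realizes u z (M.rightRun (fun s => (M.leftRun u s).erase) z k) k := by
  induction k with
  | zero =>
    refine realizes_ofOutcome (e := M.initCfg u) (by simp [initCfg]) rfl ?_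
    simp [run, initCfg, glueCfg, initTape_append]
  | succ k ih => exact realizes_rightStep ih

theorem accepts_append_iff :
    M.Accepts (u ++ z) ↔ ∃ k, M.rightRun (fun s => (M.leftRun u s).erase) z k = .halted true := by
  constructor
  · rintro ⟨N, c, hN, hc, hF⟩
    have hdead : ∀ n, N < n → M.run (u ++ z) n = none := fun n hn => by
      rw [run_eq_steps] at hN ⊢
      exact steps_eq_none_of_halted hN hc hn
    refine ⟨N + 1, ?_⟩
    have hR := realizes_rightRun (M := M) (u := u) (z := z) (N + 1)
    generalize M.rightRun _ z (N + 1) = x at hR ⊢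
    cases x with
    | halted b =>
      obtain ⟨n, d, hn, hd, hb⟩ := hR
      rw [run_eq_steps] at hN hn
      cases eq_of_steps_halted hN hc hn hd
      simpa using hb.mp hF
    | diverged => simpa [hdead (N + 1) (by omega)] using hR (N + 1)
    | running q t h s =>
      obtain ⟨_, _, _, n, hn, hrun⟩ := hR
      simp [hdead n (by omega)] at hrun
  · rintro ⟨k, hk⟩
    have hR := realizes_rightRun (M := M) (u := u) (z := z) k
    rw [hk] at hR
    obtain ⟨n, c, hn, hc, hF⟩ := hR
    exact ⟨n, c, hn, hc, hF.mpr rfl⟩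

theorem accepts_append_congr {v : List A}
    (h : ∀ s, (M.leftRun u s).erase = (M.leftRun v s).erase) :
    M.Accepts (u ++ z) ↔ M.Accepts (v ++ z) := by
  rw [accepts_append_iff, accepts_append_iff, funext h]

section Decreasing

variable [PartialOrder Γ]

def Decreasing (M : DTM A Q Γ) : Prop :=
  ∀ ⦃p σ q τ d⦄, M.δ p σ = some (q, τ, d) → τ < σ

variable {M : DTM A Q Γ} {m : ℤ}

theorem tape_stepCfg_le (hM : M.Decreasing)
    {c d : TMCfg Q Γ} (h : M.stepCfg c = some d) (i : ℤ) : d.tape i ≤ c.tape i := by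
  obtain ⟨q, τ, dir, hq, rfl⟩ := stepCfg_eq_some_iff.mp h
  by_cases hi : i = c.head
  · subst hi
    simpa using (hM hq).le
  · simp [Function.update_of_ne hi]

theorem tape_steps_le (hM : M.Decreasing)
    {c d : TMCfg Q Γ} {n : ℕ} (h : M.steps c n = some d) (i : ℤ) : d.tape i ≤ c.tape i := by
  induction n generalizing d with
  | zero => cases h; rfl
  | succ n ih =>
    obtain ⟨e, he, hstep⟩ := steps_succ_eq_some_iff.mp h
    exact (tape_stepCfg_le hM hstep i).trans (ih he)

theorem excursion_exits_lt (hM : M.Decreasing)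
    {c : TMCfg Q Γ} (hc : c.head < m) {q : Q} {L : ℤ → Γ}
    (h : M.excursion m c = .exits q L) : L (m - 1) < c.tape (m - 1) := by
  obtain ⟨n, hleft, hn⟩ := exists_steps_of_excursion_eq_exits hc.le h
  cases n with
  | zero => cases hn; exact absurd hc (lt_irrefl m)
  | succ n =>
    obtain ⟨e, he, hstep⟩ := steps_succ_eq_some_iff.mp hn
    have hehead : e.head = m - 1 := by
      have := hleft n (by omega) e he
      rcases head_stepCfg hstep with h | h <;> simp at h <;> omega
    obtain ⟨q', τ, dir, hq, hd⟩ := stepCfg_eq_some_iff.mp hstep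
    have hL : L = Function.update e.tape e.head τ := congrArg TMCfg.tape hd
    calc L (m - 1) = τ := by rw [hL, hehead, Function.update_self]
      _ < e.tape (m - 1) := hehead ▸ hM hq
      _ ≤ c.tape (m - 1) := tape_steps_le hM he _

variable [Finite Γ]

theorem length_le_of_foldl_reenter_isExit (hM : M.Decreasing)
    {s : List Q} {q : Q} {L : ℤ → Γ} (h : (s.foldl (M.reenter m) (.exits q L)).IsExit) :
    s.length ≤ (Set.Iio (L (m - 1))).ncard := by
  induction s generalizing q L with
  | nil => exact Nat.zero_le _
  | cons p s ih =>
    change (s.foldl (M.reenter m) (M.excursion m ⟨p, L, m - 1⟩)).IsExit at h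
    cases ho : M.excursion m ⟨p, L, m - 1⟩ with
    | exits q' L' =>
      rw [ho] at h
      have hlt := excursion_exits_lt hM (show m - 1 < m by omega) ho
      exact Nat.succ_le_of_lt ((ih h).trans_lt (Set.ncard_strictMono (Set.Iio_ssubset_Iio hlt)))
    | halts b => rw [ho, foldl_reenter_of_not_isExit id] at h; exact h.elim
    | diverges => rw [ho, foldl_reenter_of_not_isExit id] at h; exact h.elim

theorem length_lt_of_leftRun_isExit (hM : M.Decreasing)
    {u : List A} {s : List Q} (h : (M.leftRun u s).IsExit) : s.length < Nat.card Γ := by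
  unfold leftRun at h
  cases ho : M.excursion u.length (M.initCfg u) with
  | exits q L =>
    rw [ho] at h
    refine (length_le_of_foldl_reenter_isExit hM h).trans_lt (Set.ncard_lt_card ?_)
    exact fun hu => lt_irrefl (L (u.length - 1)) (by rw [← Set.mem_Iio, hu]; trivial)
  | halts b => rw [ho, foldl_reenter_of_not_isExit id] at h; exact h.elim
  | diverges => rw [ho, foldl_reenter_of_not_isExit id] at h; exact h.elim

theorem leftRun_eq_leftRun_take (hM : M.Decreasing)
    (u : List A) (s : List Q) : M.leftRun u s = M.leftRun u (s.take (Nat.card Γ)) := by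
  conv_lhs => rw [← List.take_append_drop (Nat.card Γ) s, leftRun, List.foldl_append]
  by_cases hx : (M.leftRun u (s.take (Nat.card Γ))).IsExit
  · have := length_lt_of_leftRun_isExit hM hx
    rw [List.drop_eq_nil_of_le (by simp at this; omega)]
    rfl
  · exact foldl_reenter_of_not_isExit hx _

theorem lang_isRegular_of_decreasing [Finite Q] (hM : M.Decreasing) : M.lang.IsRegular := by
  have := Fintype.ofFinite Q
  have : Finite {s : List Q // s.length ≤ Nat.card Γ} := (List.finite_length_le Q _).to_subtype
  refine Language.isRegular_of_leftQuotient_factors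
    (fun u (s : {s : List Q // s.length ≤ Nat.card Γ}) => (M.leftRun u s).erase) fun u v huv => ?_
  have h : ∀ s, (M.leftRun u s).erase = (M.leftRun v s).erase := fun s => by
    rw [leftRun_eq_leftRun_take hM u s, leftRun_eq_leftRun_take hM v s]
    exact congrFun huv ⟨_, List.length_take_le _ _⟩
  ext z
  exact accepts_append_congr h

end Decreasing

end DTM

theorem stmt6_general {A Q Γ : Type*} [Fintype Q] [Fintype Γ]
    (M : DTM A Q Γ) (hwr : M.WeightReducing) :
    M.lang.IsRegular := by
  obtain ⟨lt, hlt, hδ⟩ := hwr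
  let := partialOrderOfSO lt
  exact M.lang_isRegular_of_decreasing hδ

/-- Every language accepted by a weight-reducing DTM is regular. -/
theorem stmt6 {A Q Γ : Type*} [Fintype A] [Fintype Q] [Fintype Γ]
    (M : DTM A Q Γ) (hwr : M.WeightReducing) :
    M.lang.IsRegular :=
  stmt6_general M hwr
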